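/- Let u : ℝ² → ℝ be smooth, e², τ, Ω > 0 with Ω smooth, satisfying the vortex equation (1/2)Δu = e²(e^u − τ)Ω. Set v := −u + 2 log τ (corresponding to the inverse section φ⁻¹ of the inverse line bundle, rescaled). Then v satisfies the vortex equation on the deformed background: (1/2)Δv = e²(e^v − τ)·(τ⁻¹ e^{u} Ω). -/

import Mathlib

noncomputable def pdx (u : ℂ → ℝ) (z : ℂ) : ℝ := deriv (fun t : ℝ => u (z + (t : ℂ))) 0

noncomputable def pdy (u : ℂ → ℝ) (z : ℂ) : ℝ := deriv (fun t : ℝ => u (z + (t : ℂ) * Complex.I)) 0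

/-- Standard Laplacian on ℝ² ≅ ℂ. -/
noncomputable def lap (u : ℂ → ℝ) (z : ℂ) : ℝ := pdx (pdx u) z + pdy (pdy u) z

lemma line_hasDerivAt (z v : ℂ) : HasDerivAt (fun t : ℝ => z + (t : ℂ) * v) v 0 := by
  have h : HasDerivAt (fun t : ℝ => (t : ℂ)) 1 0 := Complex.ofRealCLM.hasDerivAt
  simpa using (h.mul_const v).const_add z

lemma pdx_eq (u : ℂ → ℝ) (hu : Differentiable ℝ u) :
    pdx u = fun z => fderiv ℝ u z 1 := by
  funext z
  have h1 : HasDerivAt (fun t : ℝ => z + (t : ℂ)) 1 0 := by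
    simpa using line_hasDerivAt z 1
  have := ((hu _).hasFDerivAt.comp_hasDerivAt 0 h1)
  simpa [pdx, Function.comp_def] using this.deriv

lemma pdy_eq (u : ℂ → ℝ) (hu : Differentiable ℝ u) :
    pdy u = fun z => fderiv ℝ u z Complex.I := by
  funext z
  have h1 := line_hasDerivAt z Complex.I
  have := ((hu _).hasFDerivAt.comp_hasDerivAt 0 h1)
  simpa [pdy, Function.comp_def] using this.deriv

lemma contDiff_pdx (u : ℂ → ℝ) (hu : ContDiff ℝ (⊤ : ℕ∞) u) : ContDiff ℝ (⊤ : ℕ∞) (pdx u) := by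
  rw [pdx_eq u (hu.differentiable (by simp))]
  exact (hu.fderiv_right (by simp)).clm_apply contDiff_const

lemma contDiff_pdy (u : ℂ → ℝ) (hu : ContDiff ℝ (⊤ : ℕ∞) u) : ContDiff ℝ (⊤ : ℕ∞) (pdy u) := by
  rw [pdy_eq u (hu.differentiable (by simp))]
  exact (hu.fderiv_right (by simp)).clm_apply contDiff_const

lemma pdx_neg_add (u : ℂ → ℝ) (hu : Differentiable ℝ u) (c : ℝ) :
    pdx (fun w => -u w + c) = fun z => -pdx u z := by
  funext z
  have h1 : HasDerivAt (fun t : ℝ => z + (t : ℂ)) 1 0 := by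
    simpa using line_hasDerivAt z 1
  have h := ((hu _).hasFDerivAt.comp_hasDerivAt 0 h1)
  have h2 : HasDerivAt (fun t : ℝ => -u (z + (t : ℂ)) + c)
      (-(fderiv ℝ u z 1)) 0 := by simpa using (h.neg.add_const c)
  have h' : deriv (fun t : ℝ => u (z + (t : ℂ))) 0 = fderiv ℝ u z 1 := by
    simpa [Function.comp_def] using h.deriv
  rw [pdx, h2.deriv, pdx, h']

lemma pdy_neg_add (u : ℂ → ℝ) (hu : Differentiable ℝ u) (c : ℝ) :
    pdy (fun w => -u w + c) = fun z => -pdy u z := by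
  funext z
  have h1 := line_hasDerivAt z Complex.I
  have h := ((hu _).hasFDerivAt.comp_hasDerivAt 0 h1)
  have h2 : HasDerivAt (fun t : ℝ => -u (z + (t : ℂ) * Complex.I) + c)
      (-(fderiv ℝ u z Complex.I)) 0 := by simpa using (h.neg.add_const c)
  have h' : deriv (fun t : ℝ => u (z + (t : ℂ) * Complex.I)) 0 = fderiv ℝ u z Complex.I := by
    simpa [Function.comp_def] using h.deriv
  rw [pdy, h2.deriv, pdy, h']

lemma lap_neg_add (u : ℂ → ℝ) (hu : ContDiff ℝ (⊤ : ℕ∞) u) (c : ℝ) (z : ℂ) :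
    lap (fun w => -u w + c) z = -lap u z := by
  have hd := hu.differentiable (by simp)
  have hx := contDiff_pdx u hu
  have hy := contDiff_pdy u hu
  have e1 : pdx (pdx (fun w => -u w + c)) z = -pdx (pdx u) z := by
    rw [pdx_neg_add u hd c]
    have : pdx (fun z => -pdx u z + 0) = fun z => -pdx (pdx u) z :=
      pdx_neg_add (pdx u) (hx.differentiable (by simp)) 0
    simpa using congrFun this z
  have e2 : pdy (pdy (fun w => -u w + c)) z = -pdy (pdy u) z := by
    rw [pdy_neg_add u hd c]
    have : pdy (fun z => -pdy u z + 0) = fun z => -pdy (pdy u) z :=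
      pdy_neg_add (pdy u) (hy.differentiable (by simp)) 0
    simpa using congrFun this z
  simp only [lap]
  rw [e1, e2]
  ring

/-- Symmetry of the vortex equation: if u solves the vortex equation on the background Ω,
then v = -u + 2 log τ solves the vortex equation on the deformed background τ⁻¹ e^u Ω. -/
theorem stmt3 (u : ℂ → ℝ) (hu : ContDiff ℝ (⊤ : ℕ∞) u)
    (e2 τ : ℝ) (he : 0 < e2) (hτ : 0 < τ)
    (Ω : ℂ → ℝ) (hΩs : ContDiff ℝ (⊤ : ℕ∞) Ω) (hΩ : ∀ z, 0 < Ω z)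
    (hveq : ∀ z, (1 / 2) * lap u z = e2 * (Real.exp (u z) - τ) * Ω z) :
    ∀ z, (1 / 2) * lap (fun w => -u w + 2 * Real.log τ) z
        = e2 * (Real.exp (-u z + 2 * Real.log τ) - τ) * (τ⁻¹ * Real.exp (u z) * Ω z) := by
  intro z
  rw [lap_neg_add u hu _ z]
  have hlog : Real.exp (-u z + 2 * Real.log τ) = τ ^ 2 * Real.exp (-(u z)) := by
    rw [Real.exp_add, mul_comm]
    congr 1
    rw [show (2 : ℝ) * Real.log τ = Real.log (τ ^ 2) by
      rw [Real.log_pow]; push_cast; ring]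
    exact Real.exp_log (by positivity)
  rw [hlog]
  have h := hveq z
  have hτ' : τ ≠ 0 := ne_of_gt hτ
  have hexp : Real.exp (-(u z)) * Real.exp (u z) = 1 := by
    rw [← Real.exp_add]; simp
  have h1 : τ * τ⁻¹ = 1 := mul_inv_cancel₀ hτ'
  have key : (τ ^ 2 * Real.exp (-(u z)) - τ) * (τ⁻¹ * Real.exp (u z)) = τ - Real.exp (u z) := by
    linear_combination (τ ^ 2 * τ⁻¹) * hexp + (τ - Real.exp (u z)) * h1
  have key2 : e2 * (τ ^ 2 * Real.exp (-(u z)) - τ) * (τ⁻¹ * Real.exp (u z) * Ω z)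
      = -(e2 * (Real.exp (u z) - τ) * Ω z) := by
    linear_combination e2 * Ω z * key
  rw [key2, ← h]
  ring
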